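/- arXiv:1708.02565 — 7 statements merged into one kernel-verified Lean document; each statement's English description precedes it below -/
import Mathlib

section
/- Let G be a finite group and H a subgroup of G such that the interval [H,G] in the subgroup lattice of G (i.e., the set of subgroups K with H ≤ K ≤ G, ordered by inclusion) is a distributive lattice. Then there exists an element g ∈ G such that the subgroup generated by H and g equals G. -/
/-!
Induct downwards on `H`. Choose `A = ⟨H, a⟩` covering `H`; distributivity passes to `[A, G]`,
so `⟨A, b⟩ = G` for some `b`. With `B = ⟨H, b⟩`, either `A ≤ B` and then `B = G`, or `A ⊓ B = H`
because `A` covers `H`. In the second case `L = ⟨H, ab⟩` satisfies `L ⊔ A = L ⊔ B = A ⊔ B = G`,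
and the dual distributive law gives `L = L ⊔ (A ⊓ B) = (L ⊔ A) ⊓ (L ⊔ B) = G`.
-/

section Lattice

variable {α : Type*} [Lattice α] {h : α}

theorem sup_inf_eq_of_inf_sup_eq_of_le
    (hdist : ∀ x y z, h ≤ x → h ≤ y → h ≤ z → x ⊓ (y ⊔ z) = x ⊓ y ⊔ x ⊓ z)
    {x y z : α} (hx : h ≤ x) (hy : h ≤ y) (hz : h ≤ z) :
    x ⊔ y ⊓ z = (x ⊔ y) ⊓ (x ⊔ z) := by
  rw [hdist _ _ _ (hx.trans le_sup_left) hx hz, inf_eq_right.2 (le_sup_left : x ≤ x ⊔ y),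
    inf_comm (x ⊔ y), hdist _ _ _ hz hx hy, ← sup_assoc, sup_eq_left.2 (inf_le_right : z ⊓ x ≤ x),
    inf_comm z]

theorem eq_sup_of_sup_eq_of_inf_eq
    (hdist : ∀ x y z, h ≤ x → h ≤ y → h ≤ z → x ⊓ (y ⊔ z) = x ⊓ y ⊔ x ⊓ z)
    {l x y : α} (hl : h ≤ l) (hx : h ≤ x) (hy : h ≤ y) (hxy : x ⊓ y = h)
    (hlx : l ⊔ x = x ⊔ y) (hly : l ⊔ y = x ⊔ y) : l = x ⊔ y := calc
  l = l ⊔ x ⊓ y := by rw [hxy, sup_eq_left.2 hl]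
  _ = (l ⊔ x) ⊓ (l ⊔ y) := sup_inf_eq_of_inf_sup_eq_of_le hdist hl hx hy
  _ = x ⊔ y := by rw [hlx, hly, inf_idem]

end Lattice

namespace Subgroup

variable {G : Type*} [Group G] {H K : Subgroup G} {g : G}

theorem sup_closure_singleton_le_iff : H ⊔ closure {g} ≤ K ↔ H ≤ K ∧ g ∈ K := by
  rw [sup_le_iff, closure_le, Set.singleton_subset_iff, SetLike.mem_coe]

theorem mem_sup_closure_singleton : g ∈ H ⊔ closure {g} :=
  mem_sup_right (subset_closure rfl)

variable (H) (a b : G)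

theorem sup_closure_mul_sup_left :
    (H ⊔ closure {a * b}) ⊔ (H ⊔ closure {a}) = (H ⊔ closure {a}) ⊔ (H ⊔ closure {b}) := by
  set L := H ⊔ closure {a * b}
  set A := H ⊔ closure {a}
  set B := H ⊔ closure {b}
  have ha : a ∈ L ⊔ A := mem_sup_right mem_sup_closure_singleton
  have hb : b ∈ L ⊔ A := by
    simpa using mul_mem (inv_mem ha) (mem_sup_left mem_sup_closure_singleton : a * b ∈ L ⊔ A)
  have hab : a * b ∈ A ⊔ B :=
    mul_mem (mem_sup_left mem_sup_closure_singleton) (mem_sup_right mem_sup_closure_singleton)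
  refine le_antisymm (sup_le ?_ le_sup_left) (sup_le le_sup_right ?_)
  · exact sup_closure_singleton_le_iff.2 ⟨le_sup_left.trans le_sup_left, hab⟩
  · exact sup_closure_singleton_le_iff.2 ⟨le_sup_left.trans le_sup_left, hb⟩

theorem sup_closure_mul_sup_right :
    (H ⊔ closure {a * b}) ⊔ (H ⊔ closure {b}) = (H ⊔ closure {a}) ⊔ (H ⊔ closure {b}) := by
  simpa only [← mul_inv_rev, closure_singleton_inv, sup_comm (H ⊔ closure {b})]
    using sup_closure_mul_sup_left H b⁻¹ a⁻¹

variable {H a b}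

theorem sup_closure_mul_eq_sup_of_inf_eq
    (hdist : ∀ x y z : Subgroup G, H ≤ x → H ≤ y → H ≤ z → x ⊓ (y ⊔ z) = x ⊓ y ⊔ x ⊓ z)
    (hab : (H ⊔ closure {a}) ⊓ (H ⊔ closure {b}) = H) :
    H ⊔ closure {a * b} = (H ⊔ closure {a}) ⊔ (H ⊔ closure {b}) :=
  eq_sup_of_sup_eq_of_inf_eq hdist le_sup_left le_sup_left le_sup_left hab
    (sup_closure_mul_sup_left H a b) (sup_closure_mul_sup_right H a b)

end Subgroup

open Subgroup

/-- **Ore's theorem.** If the interval `[H, G]` in the subgroup lattice of a finite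
group `G` is distributive, then there exists `g ∈ G` with `⟨H, g⟩ = G`. -/
theorem ore_distributive_interval_cyclic {G : Type*} [Group G] [Finite G] (H : Subgroup G)
    (hdist : ∀ x y z : Subgroup G, H ≤ x → H ≤ y → H ≤ z →
      x ⊓ (y ⊔ z) = (x ⊓ y) ⊔ (x ⊓ z)) :
    ∃ g : G, H ⊔ Subgroup.closure {g} = ⊤ := by
  induction H using WellFoundedGT.induction with | _ H ih
  rcases eq_or_ne H ⊤ with rfl | hH
  · exact ⟨1, top_le_iff.1 le_sup_left⟩
  obtain ⟨A, hHA, -⟩ := exists_covBy_le_of_lt hH.lt_top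
  obtain ⟨a, haA, haH⟩ := SetLike.exists_of_lt hHA.lt
  have hA : H ⊔ closure {a} = A :=
    (hHA.eq_or_eq le_sup_left (sup_closure_singleton_le_iff.2 ⟨hHA.le, haA⟩)).resolve_left
      fun h ↦ haH (h ▸ mem_sup_closure_singleton)
  obtain ⟨b, hb⟩ := ih A hHA.lt fun x y z hx hy hz ↦
    hdist x y z (hHA.le.trans hx) (hHA.le.trans hy) (hHA.le.trans hz)
  have hAb : A ⊔ (H ⊔ closure {b}) = ⊤ := by
    rw [← sup_assoc, sup_eq_left.2 hHA.le, hb]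
  by_cases hAB : A ≤ H ⊔ closure {b}
  · exact ⟨b, by rwa [sup_eq_right.2 hAB] at hAb⟩
  have hinf : A ⊓ (H ⊔ closure {b}) = H :=
    (hHA.eq_or_eq (le_inf hHA.le le_sup_left) inf_le_left).resolve_right
      fun h ↦ hAB (h ▸ inf_le_right)
  refine ⟨a * b, ?_⟩
  rw [sup_closure_mul_eq_sup_of_inf_eq hdist (hA ▸ hinf), hA, hAb]
end

section
/- Let G be a finite group and H a subgroup of G such that the interval [H,G] in the subgroup lattice is a Boolean lattice (i.e., distributive and complemented). Then there exists an element g ∈ G such that the subgroup generated by H and g equals G. -/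
/-!
Induct on `K ∈ [H, G]` to show that every such `K` is `⟨H, g⟩` for some `g`. Given `a ∈ K \ H`,
let `A = ⟨H, a⟩` and let `B` be a complement of `A` in `[H, K]`; then `B < K`, so `B = ⟨H, c⟩`.
Both `⟨H, ac⟩ ⊔ A` and `⟨H, ac⟩ ⊔ B` equal `A ⊔ B = K`, and distributivity gives
`(L ⊔ A) ⊓ (L ⊔ B) = L ⊔ (A ⊓ B) = L` for `L = ⟨H, ac⟩`, hence `L = K`.
-/

section IntervalLattice

variable {α : Type*} [Lattice α] {h : α}

theorem exists_relative_complement [OrderTop α]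
    (hdist : ∀ x y z, h ≤ x → h ≤ y → h ≤ z → x ⊓ (y ⊔ z) = x ⊓ y ⊔ x ⊓ z)
    (hcompl : ∀ k, h ≤ k → ∃ k', h ≤ k' ∧ k ⊓ k' = h ∧ k ⊔ k' = ⊤)
    {a k : α} (hha : h ≤ a) (hak : a ≤ k) :
    ∃ b, h ≤ b ∧ b ≤ k ∧ a ⊓ b = h ∧ a ⊔ b = k := by
  obtain ⟨a', hha', hinf, hsup⟩ := hcompl a hha
  refine ⟨a' ⊓ k, le_inf hha' (hha.trans hak), inf_le_right, ?_, ?_⟩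
  · rw [← inf_assoc, hinf, inf_eq_left.2 (hha.trans hak)]
  · have hk := hdist k a a' (hha.trans hak) hha hha'
    rwa [hsup, inf_top_eq, inf_eq_right.2 hak, inf_comm k a', eq_comm] at hk

theorem sup_inf_sup_eq_of_inf_eq
    (hdist : ∀ x y z, h ≤ x → h ≤ y → h ≤ z → x ⊓ (y ⊔ z) = x ⊓ y ⊔ x ⊓ z)
    {l a b : α} (hhl : h ≤ l) (hha : h ≤ a) (hhb : h ≤ b) (hab : a ⊓ b = h) :
    (l ⊔ a) ⊓ (l ⊔ b) = l := by
  have hb : (l ⊔ a) ⊓ b = b ⊓ l ⊔ h := by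
    rw [inf_comm, hdist b l a hhb hhl hha, inf_comm b a, hab]
  rw [hdist (l ⊔ a) l b (hhl.trans le_sup_left) hhl hhb, inf_eq_right.2 le_sup_left, hb]
  exact sup_eq_left.2 (sup_le inf_le_right hhl)

end IntervalLattice

namespace Subgroup

variable {G : Type*} [Group G]

theorem closure_singleton_mul_sup_closure_singleton_left (a c : G) :
    closure {a * c} ⊔ closure {a} = closure {a} ⊔ closure {c} := by
  refine le_antisymm (sup_le ?_ le_sup_left) (sup_le le_sup_right ?_)
  · rw [closure_le, Set.singleton_subset_iff]
    exact mul_mem (mem_sup_left (mem_closure_singleton_self a))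
      (mem_sup_right (mem_closure_singleton_self c))
  · rw [closure_le, Set.singleton_subset_iff]
    simpa using mul_mem (mem_sup_right (inv_mem (mem_closure_singleton_self a)))
      (mem_sup_left (mem_closure_singleton_self (a * c)))

theorem closure_singleton_mul_sup_closure_singleton_right (a c : G) :
    closure {a * c} ⊔ closure {c} = closure {a} ⊔ closure {c} := by
  refine le_antisymm (sup_le ?_ le_sup_right) (sup_le ?_ le_sup_right)
  · rw [closure_le, Set.singleton_subset_iff]
    exact mul_mem (mem_sup_left (mem_closure_singleton_self a))
      (mem_sup_right (mem_closure_singleton_self c))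
  · rw [closure_le, Set.singleton_subset_iff]
    simpa using mul_mem (mem_sup_left (mem_closure_singleton_self (a * c)))
      (mem_sup_right (inv_mem (mem_closure_singleton_self c)))

theorem sup_closure_singleton_mul_sup_left (H : Subgroup G) (a c : G) :
    (H ⊔ closure {a * c}) ⊔ (H ⊔ closure {a}) = (H ⊔ closure {a}) ⊔ (H ⊔ closure {c}) := by
  rw [sup_sup_sup_comm, sup_idem, closure_singleton_mul_sup_closure_singleton_left,
    sup_sup_sup_comm, sup_idem]

theorem sup_closure_singleton_mul_sup_right (H : Subgroup G) (a c : G) :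
    (H ⊔ closure {a * c}) ⊔ (H ⊔ closure {c}) = (H ⊔ closure {a}) ⊔ (H ⊔ closure {c}) := by
  rw [sup_sup_sup_comm, sup_idem, closure_singleton_mul_sup_closure_singleton_right,
    sup_sup_sup_comm, sup_idem]

end Subgroup

open Subgroup in
theorem Subgroup.exists_sup_closure_singleton_eq_of_le {G : Type*} [Group G] [Finite G]
    {H : Subgroup G}
    (hdist : ∀ x y z : Subgroup G, H ≤ x → H ≤ y → H ≤ z → x ⊓ (y ⊔ z) = x ⊓ y ⊔ x ⊓ z)
    (hcompl : ∀ K : Subgroup G, H ≤ K → ∃ K', H ≤ K' ∧ K ⊓ K' = H ∧ K ⊔ K' = ⊤)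
    (K : Subgroup G) : H ≤ K → ∃ g, H ⊔ closure {g} = K := by
  induction K using WellFoundedLT.induction with | _ K ih => ?_
  intro hHK
  obtain rfl | hHK := hHK.eq_or_lt
  · exact ⟨1, by rw [closure_singleton_one, sup_bot_eq]⟩
  obtain ⟨a, haK, haH⟩ := SetLike.exists_of_lt hHK
  set A := H ⊔ closure {a}
  have haA : a ∈ A := mem_sup_right (mem_closure_singleton_self a)
  have hAK : A ≤ K := sup_le hHK.le ((closure_le K).2 (Set.singleton_subset_iff.2 haK))
  obtain ⟨B, hHB, hBK, hAB, hABK⟩ := exists_relative_complement hdist hcompl le_sup_left hAK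
  have hBK : B < K := hBK.lt_of_ne fun hBeq => haH <| by
    rwa [← hAB, hBeq, inf_eq_left.2 hAK]
  obtain ⟨c, rfl⟩ := ih B hBK hHB
  refine ⟨a * c, ?_⟩
  rw [← sup_inf_sup_eq_of_inf_eq hdist le_sup_left le_sup_left hHB hAB,
    sup_closure_singleton_mul_sup_left, sup_closure_singleton_mul_sup_right, inf_idem, hABK]

/-- If the interval `[H, G]` in the subgroup lattice of a finite group `G` is a Boolean
lattice (distributive and complemented), then there exists `g ∈ G` with `⟨H, g⟩ = G`. -/
theorem boolean_interval_cyclic {G : Type*} [Group G] [Finite G] (H : Subgroup G)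
    (hdist : ∀ x y z : Subgroup G, H ≤ x → H ≤ y → H ≤ z →
      x ⊓ (y ⊔ z) = (x ⊓ y) ⊔ (x ⊓ z))
    (hcompl : ∀ K : Subgroup G, H ≤ K →
      ∃ K' : Subgroup G, H ≤ K' ∧ K ⊓ K' = H ∧ K ⊔ K' = ⊤) :
    ∃ g : G, H ⊔ Subgroup.closure {g} = ⊤ :=
  Subgroup.exists_sup_closure_singleton_eq_of_le hdist hcompl ⊤ le_top
end

section
/- Let G be a finite group and H a subgroup of G. Let t be the intersection of all coatoms (maximal elements below G) of the interval [H,G], and suppose the top interval [t,G] is a Boolean lattice. Then there exists an element g ∈ G such that the subgroup generated by H and g equals G. -/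
/-!
For each coatom `M` of `[H, G]` pick a complement `K` of `M` in the Boolean lattice `[t, G]`.
Since distinct coatoms join to `G`, distributivity gives `K = (K ⊓ M) ⊔ (K ⊓ M') = K ⊓ M'`, so
`K` lies in every other coatom, while `K ⊄ M`. An element `y_M ∈ K \ M` therefore lies in
exactly the coatoms other than `M`, and the product of the `y_M` lies in no coatom of `[H, G]`,
so it generates `G` together with `H`.
-/

theorem le_of_inf_eq_of_isCoatom {α : Type*} [Lattice α] [OrderTop α] {t M M' K : α}
    (hdist : ∀ x y z : α, t ≤ x → t ≤ y → t ≤ z → x ⊓ (y ⊔ z) = x ⊓ y ⊔ x ⊓ z)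
    (hM : IsCoatom M) (hM' : IsCoatom M') (hne : M ≠ M')
    (htM : t ≤ M) (htM' : t ≤ M') (htK : t ≤ K) (hinf : M ⊓ K = t) : K ≤ M' :=
  calc K = K ⊓ (M ⊔ M') := by rw [hM.sup_eq_top_of_ne hM' hne, inf_top_eq]
    _ = t ⊔ K ⊓ M' := by rw [hdist K M M' htK htM htM', inf_comm K M, hinf]
    _ = K ⊓ M' := sup_eq_right.mpr (le_inf htK htM')
    _ ≤ M' := inf_le_right

namespace Subgroup

variable {G : Type*} [Group G]

theorem exists_forall_notMem_of_forall_exists {T : Finset (Subgroup G)}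
    (hT : ∀ M ∈ T, ∃ y ∉ M, ∀ M' ∈ T, M' ≠ M → y ∈ M') :
    ∃ g : G, ∀ M ∈ T, g ∉ M := by
  classical
  choose! y hyM hyM' using hT
  -- `g` is the product of the `y M` over `M ∈ S`.
  suffices h : ∀ S ⊆ T, ∃ g : G, (∀ M ∈ S, g ∉ M) ∧ ∀ M ∈ T, M ∉ S → g ∈ M from
    (h T le_rfl).imp fun _ hg => hg.1
  intro S
  induction S using Finset.induction_on with
  | empty => exact fun _ => ⟨1, by simp, fun M _ _ => M.one_mem⟩
  | @insert M₁ S hM₁S ih =>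
    intro hsub
    have hM₁T : M₁ ∈ T := hsub (Finset.mem_insert_self M₁ S)
    obtain ⟨g, hgS, hgT⟩ := ih ((Finset.subset_insert M₁ S).trans hsub)
    refine ⟨g * y M₁, ?_, ?_⟩
    · intro M hM
      rcases Finset.mem_insert.mp hM with rfl | hMS
      · exact fun h => hyM M hM₁T ((mul_mem_cancel_left (hgT M hM₁T hM₁S)).mp h)
      · have hMM₁ : M ≠ M₁ := by rintro rfl; exact hM₁S hMS
        exact fun h => hgS M hMS ((mul_mem_cancel_right (hyM' M₁ hM₁T M (hsub hM) hMM₁)).mp h)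
    · intro M hMT hM
      have hMM₁ : M ≠ M₁ := fun h => hM (h ▸ Finset.mem_insert_self M₁ S)
      exact mul_mem (hgT M hMT fun h => hM (Finset.mem_insert_of_mem h)) (hyM' M₁ hM₁T M hMT hMM₁)

theorem sup_closure_singleton_eq_top_of_forall_notMem [Finite G] {H : Subgroup G} {g : G}
    (hg : ∀ M : Subgroup G, H ≤ M → IsCoatom M → g ∉ M) : H ⊔ closure {g} = ⊤ := by
  by_contra hne
  obtain ⟨M, hM, hle⟩ := (eq_top_or_exists_le_coatom (H ⊔ closure {g})).resolve_left hne
  exact hg M (le_sup_left.trans hle) hM (hle (mem_sup_right (mem_closure_singleton_self g)))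

end Subgroup

/-- If the top interval `[t, G]` of `[H, G]` (where `t` is the intersection of all
coatoms of `[H, G]`) is a Boolean lattice, then there exists `g ∈ G` with `⟨H, g⟩ = G`. -/
theorem top_boolean_interval_cyclic {G : Type*} [Group G] [Finite G] (H : Subgroup G)
    (t : Subgroup G) (ht : t = sInf {M : Subgroup G | H ≤ M ∧ IsCoatom M})
    (hdist : ∀ x y z : Subgroup G, t ≤ x → t ≤ y → t ≤ z →
      x ⊓ (y ⊔ z) = (x ⊓ y) ⊔ (x ⊓ z))
    (hcompl : ∀ K : Subgroup G, t ≤ K →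
      ∃ K' : Subgroup G, t ≤ K' ∧ K ⊓ K' = t ∧ K ⊔ K' = ⊤) :
    ∃ g : G, H ⊔ Subgroup.closure {g} = ⊤ := by
  set coatoms := {M : Subgroup G | H ≤ M ∧ IsCoatom M}
  have ht_le : ∀ M ∈ coatoms, t ≤ M := fun M hM => ht ▸ sInf_le hM
  have separating : ∀ M ∈ coatoms.toFinite.toFinset,
      ∃ y ∉ M, ∀ M' ∈ coatoms.toFinite.toFinset, M' ≠ M → y ∈ M' := by
    intro M hM
    rw [Set.Finite.mem_toFinset] at hM
    obtain ⟨K, htK, hinf, hsup⟩ := hcompl M (ht_le M hM)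
    have hKM : ¬K ≤ M := fun h => hM.2.1 (by rwa [sup_eq_left.mpr h] at hsup)
    obtain ⟨y, hyK, hyM⟩ := SetLike.not_le_iff_exists.mp hKM
    refine ⟨y, hyM, fun M' hM' hne => ?_⟩
    rw [Set.Finite.mem_toFinset] at hM'
    exact le_of_inf_eq_of_isCoatom hdist hM.2 hM'.2 hne.symm (ht_le M hM) (ht_le M' hM')
      htK hinf hyK
  obtain ⟨g, hg⟩ := Subgroup.exists_forall_notMem_of_forall_exists separating
  exact ⟨g, Subgroup.sup_closure_singleton_eq_top_of_forall_notMem fun M hHM hM =>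
    hg M (coatoms.toFinite.mem_toFinset.mpr ⟨hHM, hM⟩)⟩
end

section
/- A finite group G is cyclic if and only if its subgroup lattice (the lattice of all subgroups of G ordered by inclusion, with meet the intersection and join the subgroup generated by the union) is a distributive lattice. -/
/-!
If `G` is cyclic of order `n`, then `H ↦ |H|` identifies the subgroup lattice of `G` with the
divisors of `n`, with `⊓` and `⊔` becoming `gcd` and `lcm`, which distribute over each other.

Conversely, distributivity first forces `G` to be abelian: the three subgroups `⟨a⟩`, `⟨b⟩`,
`⟨ab⟩` have pairwise the same join, so `⟨a⟩ ⊔ ⟨b⟩ = (⟨a⟩ ⊓ ⟨b⟩) ⊔ ⟨ab⟩`, and every element of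
the right-hand side commutes with `ab`. A finite abelian group that is not cyclic contains
elements `y`, `z` of the same prime order with `⟨y⟩ ≠ ⟨z⟩`; then `⟨yz⟩ ≤ ⟨y⟩ ⊔ ⟨z⟩` meets both
`⟨y⟩` and `⟨z⟩` trivially, which distributivity forbids.
-/

open Subgroup

theorem Nat.gcd_lcm_distrib_left (a b c : ℕ) :
    gcd a (lcm b c) = lcm (gcd a b) (gcd a c) := by
  rcases eq_or_ne a 0 with rfl | ha
  · simp
  rcases eq_or_ne b 0 with rfl | hb
  · simpa using (Nat.lcm_eq_left (Nat.gcd_dvd_left a c)).symm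
  rcases eq_or_ne c 0 with rfl | hc
  · simpa using (Nat.lcm_eq_right (Nat.gcd_dvd_left a b)).symm
  have hab := gcd_ne_zero_left (n := b) ha
  have hac := gcd_ne_zero_left (n := c) ha
  refine Nat.eq_of_factorization_eq (gcd_ne_zero_left ha) (lcm_ne_zero hab hac) fun p => ?_
  simp only [Nat.factorization_gcd ha (lcm_ne_zero hb hc), Nat.factorization_lcm hb hc,
    Nat.factorization_lcm hab hac, Nat.factorization_gcd ha hb, Nat.factorization_gcd ha hc,
    Finsupp.inf_apply, Finsupp.sup_apply]
  omega

theorem sup_eq_inf_sup_of_sup_eq_sup {α : Type*} [DistribLattice α] {a b c : α}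
    (hac : a ⊔ c = a ⊔ b) (hbc : c ⊔ b = a ⊔ b) : a ⊔ b = a ⊓ b ⊔ c := by
  rw [sup_inf_right, hac, sup_comm b c, hbc, inf_idem]

namespace IsCyclic

variable {G : Type*} [Group G] [Finite G] [IsCyclic G]

theorem exists_orderOf_eq_of_dvd_natCard {d : ℕ} (hd : d ∣ Nat.card G) :
    ∃ g : G, orderOf g = d := by
  obtain ⟨g, hg⟩ := IsCyclic.exists_ofOrder_eq_natCard (α := G)
  have hn : Nat.card G ≠ 0 := Nat.card_pos.ne'
  refine ⟨g ^ (Nat.card G / d), ?_⟩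
  rw [orderOf_pow_of_dvd (Nat.div_ne_zero_iff_of_dvd hd |>.2 ⟨hn, ne_zero_of_dvd_ne_zero hn hd⟩)
    (hg.symm ▸ Nat.div_dvd_of_dvd hd), hg, Nat.div_div_self hd hn]

theorem mem_iff_orderOf_dvd_natCard (H : Subgroup G) {w : G} :
    w ∈ H ↔ orderOf w ∣ Nat.card H := by
  classical
  have := Fintype.ofFinite G
  refine ⟨H.orderOf_dvd_natCard, fun hw => ?_⟩
  -- `H` lies in the solution set of `a ^ |H| = 1`, which in a cyclic group has at most `|H|` elements.
  have hH : (H : Set G).toFinset = Finset.univ.filter (· ^ Nat.card H = 1) := by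
    refine Finset.eq_of_subset_of_card_le (fun a ha => ?_) ?_
    · rw [Finset.mem_filter_univ, ← orderOf_dvd_iff_pow_eq_one]
      exact H.orderOf_dvd_natCard (Set.mem_toFinset.1 ha)
    · calc _ ≤ Nat.card H := IsCyclic.card_pow_eq_one_le Nat.card_pos
        _ = _ := Nat.card_eq_card_toFinset (H : Set G)
  have hw' : w ∈ (H : Set G).toFinset :=
    hH ▸ (Finset.mem_filter_univ w).2 (orderOf_dvd_iff_pow_eq_one.1 hw)
  exact Set.mem_toFinset.1 hw'

theorem le_iff_natCard_dvd {H K : Subgroup G} : H ≤ K ↔ Nat.card H ∣ Nat.card K :=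
  ⟨card_dvd_of_le, fun h _ hw =>
    (mem_iff_orderOf_dvd_natCard K).2 ((H.orderOf_dvd_natCard hw).trans h)⟩

theorem natCard_inf (H K : Subgroup G) :
    Nat.card ↥(H ⊓ K) = Nat.gcd (Nat.card H) (Nat.card K) := by
  refine Nat.dvd_antisymm
    (Nat.dvd_gcd (card_dvd_of_le inf_le_left) (card_dvd_of_le inf_le_right)) ?_
  obtain ⟨u, hu⟩ := exists_orderOf_eq_of_dvd_natCard
    ((Nat.gcd_dvd_left (Nat.card H) (Nat.card K)).trans (card_subgroup_dvd_card H))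
  have huH : u ∈ H := (mem_iff_orderOf_dvd_natCard H).2 (hu ▸ Nat.gcd_dvd_left _ _)
  have huK : u ∈ K := (mem_iff_orderOf_dvd_natCard K).2 (hu ▸ Nat.gcd_dvd_right _ _)
  exact hu ▸ (H ⊓ K).orderOf_dvd_natCard ⟨huH, huK⟩

theorem natCard_sup (H K : Subgroup G) :
    Nat.card ↥(H ⊔ K) = Nat.lcm (Nat.card H) (Nat.card K) := by
  refine Nat.dvd_antisymm ?_
    (Nat.lcm_dvd (card_dvd_of_le le_sup_left) (card_dvd_of_le le_sup_right))
  obtain ⟨u, hu⟩ := exists_orderOf_eq_of_dvd_natCard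
    (Nat.lcm_dvd (card_subgroup_dvd_card H) (card_subgroup_dvd_card K))
  have hle : H ⊔ K ≤ zpowers u := sup_le
    (le_iff_natCard_dvd.2 (by rw [Nat.card_zpowers, hu]; exact Nat.dvd_lcm_left _ _))
    (le_iff_natCard_dvd.2 (by rw [Nat.card_zpowers, hu]; exact Nat.dvd_lcm_right _ _))
  simpa [Nat.card_zpowers, hu] using card_dvd_of_le hle

theorem subgroup_inf_sup_left (x y z : Subgroup G) : x ⊓ (y ⊔ z) = x ⊓ y ⊔ x ⊓ z := by
  refine (eq_of_le_of_card_ge le_inf_sup ?_).symm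
  rw [natCard_inf, natCard_sup, natCard_sup, natCard_inf, natCard_inf, Nat.gcd_lcm_distrib_left]

end IsCyclic

namespace Subgroup

variable {G : Type*} [Group G]

theorem zpowers_sup_zpowers_mul (a b : G) :
    zpowers a ⊔ zpowers (a * b) = zpowers a ⊔ zpowers b := by
  apply le_antisymm <;> refine sup_le le_sup_left (zpowers_le.2 ?_)
  · exact mul_mem (mem_sup_left (mem_zpowers a)) (mem_sup_right (mem_zpowers b))
  · simpa using
      mul_mem (inv_mem (mem_sup_left (mem_zpowers a))) (mem_sup_right (mem_zpowers (a * b)))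

theorem zpowers_mul_sup_zpowers (a b : G) :
    zpowers (a * b) ⊔ zpowers b = zpowers a ⊔ zpowers b := by
  apply le_antisymm <;> refine sup_le (zpowers_le.2 ?_) le_sup_right
  · exact mul_mem (mem_sup_left (mem_zpowers a)) (mem_sup_right (mem_zpowers b))
  · simpa using
      mul_mem (mem_sup_left (mem_zpowers (a * b))) (inv_mem (mem_sup_right (mem_zpowers b)))

theorem zpowers_inf_eq_bot_of_notMem [Finite G] {u : G} (hu : (orderOf u).Prime)
    {H : Subgroup G} (huH : u ∉ H) : zpowers u ⊓ H = ⊥ := by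
  have hdvd : Nat.card ↥(zpowers u ⊓ H) ∣ orderOf u :=
    Nat.card_zpowers u ▸ card_dvd_of_le inf_le_left
  rcases hu.eq_one_or_self_of_dvd _ hdvd with h | h
  · exact eq_bot_of_card_eq _ h
  · have : zpowers u ⊓ H = zpowers u :=
      eq_of_le_of_card_ge inf_le_left (by rw [h, Nat.card_zpowers])
    exact absurd (zpowers_le.1 (this ▸ inf_le_right)) huH

theorem exists_pow_prime_mem_of_ne_top [Finite G] {N : Subgroup G} [N.Normal] (hN : N ≠ ⊤) :
    ∃ p, p.Prime ∧ ∃ x ∉ N, x ^ p ∈ N := by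
  have : Nontrivial (G ⧸ N) := QuotientGroup.nontrivial_iff.2 hN
  obtain ⟨p, hp, hpQ⟩ := Nat.exists_prime_and_dvd (Finite.one_lt_card (α := G ⧸ N)).ne'
  have := Fact.mk hp
  obtain ⟨q, hq⟩ := exists_prime_orderOf_dvd_card' p hpQ
  obtain ⟨x, rfl⟩ := QuotientGroup.mk_surjective q
  refine ⟨p, hp, x, fun hx => hp.ne_one ?_, ?_⟩
  · rw [← hq, (QuotientGroup.eq_one_iff x).2 hx, orderOf_one]
  · rw [← QuotientGroup.eq_one_iff, QuotientGroup.mk_pow, ← hq, pow_orderOf_eq_one]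

end Subgroup

namespace CommGroup

variable {G : Type*} [CommGroup G] [Finite G]

theorem exists_pow_prime_eq_one_notMem_zpowers {g x : G} (hg : orderOf g = Monoid.exponent G)
    {p : ℕ} (hp : p.Prime) (hx : x ∉ zpowers g) (hxp : x ^ p ∈ zpowers g) :
    ∃ y ∉ zpowers g, y ^ p = 1 := by
  obtain ⟨k, hk⟩ := mem_zpowers_iff.1 hxp
  have hpx : p ∣ orderOf x := by
    by_contra hpx
    obtain ⟨m, hm⟩ := exists_pow_eq_self_of_coprime ((Nat.Prime.coprime_iff_not_dvd hp).2 hpx)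
    exact hx (hm ▸ pow_mem hxp m)
  obtain ⟨m, hm⟩ := hpx.trans (Monoid.order_dvd_exponent x)
  have hm0 : (m : ℤ) ≠ 0 :=
    Int.natCast_ne_zero.2 (right_ne_zero_of_mul (hm ▸ Monoid.exponent_ne_zero_of_finite))
  -- `g ^ k = x ^ p` has order dividing `exponent G / p = m`, and `g` has order `p * m`.
  have hpk : (p : ℤ) ∣ k := by
    have h1 : g ^ (k * m) = 1 := by
      rw [zpow_mul, hk, zpow_natCast, ← pow_mul, ← hm, Monoid.pow_exponent_eq_one]
    have h2 := orderOf_dvd_iff_zpow_eq_one.2 h1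
    rw [hg, hm, Nat.cast_mul] at h2
    exact (mul_dvd_mul_iff_right hm0).1 h2
  obtain ⟨j, rfl⟩ := hpk
  refine ⟨x * g ^ (-j), fun hy => hx ?_, ?_⟩
  · simpa using mul_mem hy (zpow_mem (mem_zpowers g) j)
  · rw [mul_pow, ← hk]
    group

theorem exists_orderOf_eq_prime_notMem_zpowers (hG : ¬IsCyclic G) :
    ∃ p, p.Prime ∧ ∃ y z : G, orderOf y = p ∧ orderOf z = p ∧ y ∉ zpowers z := by
  obtain ⟨g, hg⟩ :=
    Monoid.exists_orderOf_eq_exponent (Monoid.ExponentExists.of_finite (G := G))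
  have htop : zpowers g ≠ ⊤ := fun htop => hG (isCyclic_iff_exists_zpowers_eq_top.2 ⟨g, htop⟩)
  obtain ⟨p, hp, x, hx, hxp⟩ := exists_pow_prime_mem_of_ne_top htop
  obtain ⟨y, hy, hyp⟩ := exists_pow_prime_eq_one_notMem_zpowers hg hp hx hxp
  have := Fact.mk hp
  have hy_ord : orderOf y = p := orderOf_eq_prime hyp fun h1 => hy (h1 ▸ one_mem _)
  have hpg : p ∣ Nat.card (zpowers g) := by
    rw [Nat.card_zpowers, hg, ← hy_ord]
    exact Monoid.order_dvd_exponent y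
  obtain ⟨z, hz⟩ := exists_prime_orderOf_dvd_card' p hpg
  refine ⟨p, hp, y, z, hy_ord, by rwa [Subgroup.orderOf_coe], fun hyz => hy ?_⟩
  exact zpowers_le.2 z.2 hyz

end CommGroup

section SubgroupDistrib

variable {G : Type*} [Group G]

theorem commute_of_subgroup_inf_sup_left
    (h : ∀ x y z : Subgroup G, x ⊓ (y ⊔ z) = x ⊓ y ⊔ x ⊓ z) (a b : G) : Commute a b := by
  let : DistribLattice (Subgroup G) := .ofInfSupLe fun x y z => (h x y z).le
  have hsup : zpowers a ⊔ zpowers b = zpowers a ⊓ zpowers b ⊔ zpowers (a * b) :=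
    sup_eq_inf_sup_of_sup_eq_sup (zpowers_sup_zpowers_mul a b) (zpowers_mul_sup_zpowers a b)
  have hle : zpowers a ⊔ zpowers b ≤ centralizer {a * b} := by
    rw [hsup]
    refine sup_le (fun x ⟨hxa, hxb⟩ => ?_) (zpowers_le.2 (mem_centralizer_singleton_iff.2 rfl))
    obtain ⟨m, rfl⟩ := mem_zpowers_iff.1 hxa
    obtain ⟨n, hn⟩ := mem_zpowers_iff.1 hxb
    refine mem_centralizer_singleton_iff.2 (Commute.mul_right ?_ ?_).eq
    · exact (Commute.refl a).zpow_left m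
    · exact hn ▸ (Commute.refl b).zpow_left n
  have := mem_centralizer_singleton_iff.1 (hle (mem_sup_left (mem_zpowers a)))
  exact mul_left_cancel (this.trans (mul_assoc a b a))

theorem mem_zpowers_of_subgroup_inf_sup_left [Finite G]
    (h : ∀ x y z : Subgroup G, x ⊓ (y ⊔ z) = x ⊓ y ⊔ x ⊓ z) {y z : G} (hyz : Commute y z)
    {p : ℕ} (hp : p.Prime) (hy : orderOf y = p) (hz : orderOf z = p) : y ∈ zpowers z := by
  by_contra hyz'
  have hzy : z ∉ zpowers y := fun hzy => by
    have hz1 : z ∈ zpowers y ⊓ zpowers z := ⟨hzy, mem_zpowers z⟩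
    rw [zpowers_inf_eq_bot_of_notMem (hy ▸ hp) hyz', mem_bot] at hz1
    exact hp.ne_one (hz ▸ hz1 ▸ orderOf_one)
  have hwz : y * z ∉ zpowers z := fun hw =>
    hyz' (by simpa using mul_mem hw (inv_mem (mem_zpowers z)))
  have hwy : y * z ∉ zpowers y := fun hw =>
    hzy (by simpa using mul_mem (inv_mem (mem_zpowers y)) hw)
  have hw1 : y * z ≠ 1 := fun hw => hwz (hw ▸ one_mem _)
  have hwp : orderOf (y * z) = p := by
    have := Fact.mk hp
    refine orderOf_eq_prime ?_ hw1
    rw [hyz.mul_pow, ← hy, pow_orderOf_eq_one, one_mul, hy, ← hz, pow_orderOf_eq_one]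
  have hw_bot : zpowers (y * z) = ⊥ := calc
    zpowers (y * z) = zpowers (y * z) ⊓ (zpowers y ⊔ zpowers z) :=
      (inf_eq_left.2 (zpowers_le.2 (mul_mem (mem_sup_left (mem_zpowers y))
        (mem_sup_right (mem_zpowers z))))).symm
    _ = zpowers (y * z) ⊓ zpowers y ⊔ zpowers (y * z) ⊓ zpowers z := h _ _ _
    _ = ⊥ := by
      rw [zpowers_inf_eq_bot_of_notMem (hwp ▸ hp) hwy,
        zpowers_inf_eq_bot_of_notMem (hwp ▸ hp) hwz, sup_bot_eq]
  exact hw1 (zpowers_eq_bot.1 hw_bot)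

end SubgroupDistrib

/-- **Ore's theorem.** A finite group is cyclic if and only if its subgroup lattice
is distributive. -/
theorem isCyclic_iff_distributive_subgroup_lattice {G : Type*} [Group G] [Finite G] :
    IsCyclic G ↔
      ∀ x y z : Subgroup G, x ⊓ (y ⊔ z) = (x ⊓ y) ⊔ (x ⊓ z) := by
  refine ⟨fun _ => IsCyclic.subgroup_inf_sup_left, fun h => ?_⟩
  let : CommGroup G := { mul_comm := commute_of_subgroup_inf_sup_left h }
  by_contra hG
  obtain ⟨p, hp, y, z, hy, hz, hyz⟩ := CommGroup.exists_orderOf_eq_prime_notMem_zpowers hG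
  exact hyz (mem_zpowers_of_subgroup_inf_sup_left h (Commute.all y z) hp hy hz)
end

section
/- Let G be a finite group, H ≤ K ≤ G subgroups, and U an irreducible finite-dimensional complex representation of K with nonzero H-fixed subspace U^H ≠ 0. Let W = Ind_K^G(U) be the induced representation of G, with U identified with the K-subrepresentation e ⊗ U of W. Then the pointwise stabilizer in G of the H-fixed subspace W^H is contained in the pointwise stabilizer in K of U^H, i.e., G_{(W^H)} ≤ K_{(U^H)}. -/
/-- The fixed-point subspace `V^H` of a subgroup `H` under a representation `ρ`. -/
def fixedSubmodule {G : Type*} [Group G] {V : Type*} [AddCommGroup V] [Module ℂ V]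
    (ρ : Representation ℂ G V) (H : Subgroup G) : Submodule ℂ V where
  carrier := {v | ∀ h ∈ H, ρ h v = v}
  add_mem' := by
    intro a b ha hb h hh
    rw [map_add, ha h hh, hb h hh]
  zero_mem' := by intro h hh; simp
  smul_mem' := by
    intro c v hv h hh
    rw [map_smul, hv h hh]

/-- The pointwise stabilizer subgroup `G_(X)` of a subset `X` under a representation `ρ`. -/
def repStab {G : Type*} [Group G] {V : Type*} [AddCommGroup V] [Module ℂ V]
    (ρ : Representation ℂ G V) (X : Set V) : Subgroup G where
  carrier := {g | ∀ x ∈ X, ρ g x = x}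
  one_mem' := by intro x hx; simp
  mul_mem' := by
    intro a b ha hb x hx
    rw [map_mul, Module.End.mul_apply, hb x hx, ha x hx]
  inv_mem' := by
    intro a ha x hx
    have h1 : ρ a x = x := ha x hx
    calc ρ a⁻¹ x = ρ a⁻¹ (ρ a x) := by rw [h1]
      _ = ρ (a⁻¹ * a) x := by rw [map_mul, Module.End.mul_apply]
      _ = x := by simp

/-- A representation is irreducible if the space is nontrivial and the only invariant
subspaces are `⊥` and `⊤`. -/
def IsIrredRep {G : Type*} [Group G] {V : Type*} [AddCommGroup V] [Module ℂ V]
    (ρ : Representation ℂ G V) : Prop :=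
  Nontrivial V ∧ ∀ p : Submodule ℂ V, (∀ g : G, ∀ v ∈ p, ρ g v ∈ p) → p = ⊥ ∨ p = ⊤

/-- The carrier of the induced representation `Ind_K^G U`, realized as the space of
functions `f : G → U` satisfying `f (k * g) = σ k (f g)`; the canonical copy `eU` of `U`
inside it consists of the functions supported on `K`. -/
def indCarrier {G : Type*} [Group G] {U : Type*} [AddCommGroup U] [Module ℂ U]
    (K : Subgroup G) (σ : Representation ℂ K U) : Submodule ℂ (G → U) where
  carrier := {f | ∀ (k : K) (g : G), f (↑k * g) = σ k (f g)}
  add_mem' := by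
    intro a b ha hb k g
    simp [ha k g, hb k g]
  zero_mem' := by intro k g; simp
  smul_mem' := by
    intro c f hf k g
    simp [hf k g]

/-- The induced representation `Ind_K^G U`, with `G` acting by right translation. -/
def indRep {G : Type*} [Group G] {U : Type*} [AddCommGroup U] [Module ℂ U]
    (K : Subgroup G) (σ : Representation ℂ K U) :
    Representation ℂ G (indCarrier K σ) where
  toFun g :=
    { toFun := fun f => ⟨fun x => (f : G → U) (x * g), by
        intro k x
        have := f.2 k (x * g)
        simpa [mul_assoc] using this⟩
      map_add' := by intro a b; ext x; simp
      map_smul' := by intro c a; ext x; simp }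
  map_one' := by ext f x; simp
  map_mul' := by
    intro g g'
    ext f x
    simp [mul_assoc]

/-
Extending a vector `u ∈ U^H` by zero off `K` gives an `H`-fixed vector `f_u` of the induced
representation with `f_u(x) = σ(x) u` on `K`. An element `g` fixing `f_u` under right translation
satisfies `f_u(g) = f_u(1) = u`; taking `u ≠ 0` forces `g ∈ K`, and then `σ(g) u = u` for
every `u ∈ U^H`.
-/

section ExtendByZero

variable {G : Type*} [Group G] {U : Type*} [AddCommGroup U] [Module ℂ U]
  (K : Subgroup G) (σ : Representation ℂ K U)

open scoped Classical in
noncomputable def extendByZero (u : U) : indCarrier K σ :=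
  ⟨fun x => if hx : x ∈ K then σ ⟨x, hx⟩ u else 0, by
    intro k x
    by_cases hx : x ∈ K
    · have hkx : (k : G) * x ∈ K := K.mul_mem k.2 hx
      simp only [dif_pos hx, dif_pos hkx]
      rw [show (⟨k * x, hkx⟩ : K) = k * ⟨x, hx⟩ from rfl, map_mul, Module.End.mul_apply]
    · have hkx : (k : G) * x ∉ K := fun h => hx ((K.mul_mem_cancel_left k.2).mp h)
      simp only [dif_neg hx, dif_neg hkx, map_zero]⟩

variable {K σ}

theorem extendByZero_apply_of_mem (u : U) {x : G} (hx : x ∈ K) :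
    (extendByZero K σ u : G → U) x = σ ⟨x, hx⟩ u :=
  dif_pos hx

theorem extendByZero_apply_of_notMem (u : U) {x : G} (hx : x ∉ K) :
    (extendByZero K σ u : G → U) x = 0 :=
  dif_neg hx

theorem extendByZero_apply_one (u : U) : (extendByZero K σ u : G → U) 1 = u := by
  rw [extendByZero_apply_of_mem u K.one_mem]
  exact LinearMap.congr_fun (map_one σ) u

theorem extendByZero_mem_fixedSubmodule {H : Subgroup G} (hHK : H ≤ K) {u : U}
    (hu : u ∈ fixedSubmodule σ (H.subgroupOf K)) :
    extendByZero K σ u ∈ fixedSubmodule (indRep K σ) H := by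
  intro h hh
  have hhK : h ∈ K := hHK hh
  apply Subtype.ext
  funext x
  change (extendByZero K σ u : G → U) (x * h) = (extendByZero K σ u : G → U) x
  by_cases hx : x ∈ K
  · have hσu : σ ⟨h, hhK⟩ u = u := hu ⟨h, hhK⟩ (Subgroup.mem_subgroupOf.mpr hh)
    rw [extendByZero_apply_of_mem u (K.mul_mem hx hhK), extendByZero_apply_of_mem u hx,
      show (⟨x * h, K.mul_mem hx hhK⟩ : K) = ⟨x, hx⟩ * ⟨h, hhK⟩ from rfl, map_mul,
      Module.End.mul_apply, hσu]
  · have hxh : x * h ∉ K := fun hc => hx ((K.mul_mem_cancel_right hhK).mp hc)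
    rw [extendByZero_apply_of_notMem u hx, extendByZero_apply_of_notMem u hxh]

end ExtendByZero

theorem apply_eq_apply_one_of_indRep_eq {G : Type*} [Group G] {U : Type*} [AddCommGroup U]
    [Module ℂ U] {K : Subgroup G} {σ : Representation ℂ K U} {g : G} {f : indCarrier K σ}
    (hf : indRep K σ g f = f) : (f : G → U) g = (f : G → U) 1 := by
  have h : (f : G → U) (1 * g) = (f : G → U) 1 := congrFun (congrArg Subtype.val hf) 1
  rwa [one_mul] at h

theorem repStab_ind_le_repStab_general {G : Type*} [Group G]
    (H K : Subgroup G) (hHK : H ≤ K)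
    {U : Type*} [AddCommGroup U] [Module ℂ U]
    (σ : Representation ℂ K U)
    (hUH : fixedSubmodule σ (H.subgroupOf K) ≠ ⊥) :
    repStab (indRep K σ) ↑(fixedSubmodule (indRep K σ) H) ≤
      (repStab σ ↑(fixedSubmodule σ (H.subgroupOf K))).map K.subtype := by
  intro g hg
  have hext : ∀ v ∈ fixedSubmodule σ (H.subgroupOf K),
      (extendByZero K σ v : G → U) g = v := fun v hv => by
    rw [apply_eq_apply_one_of_indRep_eq (hg _ (extendByZero_mem_fixedSubmodule hHK hv)),
      extendByZero_apply_one]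
  obtain ⟨u, hu, hu0⟩ := (Submodule.ne_bot_iff _).mp hUH
  have hgK : g ∈ K := by
    by_contra hgK
    exact hu0 ((hext u hu).symm.trans (extendByZero_apply_of_notMem u hgK))
  refine ⟨⟨g, hgK⟩, fun v hv => ?_, rfl⟩
  rw [← extendByZero_apply_of_mem v hgK]
  exact hext v hv

/-- For `H ≤ K ≤ G` and `U` an irreducible representation of `K` with `U^H ≠ 0`,
the pointwise stabilizer in `G` of `W^H` (where `W = Ind_K^G U`) is contained in the
pointwise stabilizer in `K` of `U^H`. -/
theorem repStab_ind_le_repStab {G : Type*} [Group G] [Finite G]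
    (H K : Subgroup G) (hHK : H ≤ K)
    {U : Type*} [AddCommGroup U] [Module ℂ U] [FiniteDimensional ℂ U]
    (σ : Representation ℂ K U) (hσ : IsIrredRep σ)
    (hUH : fixedSubmodule σ (H.subgroupOf K) ≠ ⊥) :
    repStab (indRep K σ) ↑(fixedSubmodule (indRep K σ) H) ≤
      (repStab σ ↑(fixedSubmodule σ (H.subgroupOf K))).map K.subtype :=
  repStab_ind_le_repStab_general H K hHK σ hUH
end

section
/- Let G be a finite group, H ≤ K ≤ G subgroups, and U an irreducible finite-dimensional complex representation of K with U^H ≠ 0. Let V be an irreducible component (irreducible G-subrepresentation) of the induced representation W = Ind_K^G(U). Then V^H ≠ 0 and the pointwise stabilizer in K of V^H is contained in the pointwise stabilizer in K of U^H, i.e., K_{(V^H)} ≤ K_{(U^H)}. -/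
set_option synthInstance.maxHeartbeats 1000000
set_option maxHeartbeats 1000000

/-- The subrepresentation on an invariant submodule. -/
def subRep {G : Type*} [Group G] {V : Type*} [AddCommGroup V] [Module ℂ V]
    (ρ : Representation ℂ G V) (p : Submodule ℂ V)
    (hp : ∀ g : G, ∀ v ∈ p, ρ g v ∈ p) : Representation ℂ G p where
  toFun g := (ρ g).restrict (hp g)
  map_one' := by
    ext v
    simp [LinearMap.restrict_apply]
  map_mul' := by
    intro g g'
    ext v
    simp [LinearMap.restrict_apply, map_mul]

/-! Evaluation at `1` is a `K`-equivariant map `Ind_K^G U → U`. On an irreducible component `V`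
it is nonzero (translate a nonzero function until it is nonzero at `1`), so it is onto `U` by
irreducibility of `U`. Averaging over `H` then shows that it maps `V^H` onto `U^H`: hence
`V^H ≠ 0`, and an element of `K` fixing `V^H` pointwise fixes its image `U^H` pointwise. -/

open Representation

lemma Representation.averageMap_apply {k G V : Type*} [CommRing k] [Group G] [Fintype G]
    [Invertible (Fintype.card G : k)] [AddCommGroup V] [Module k V] (ρ : Representation k G V)
    (v : V) : averageMap ρ v = ⅟(Fintype.card G : k) • ∑ g : G, ρ g v := by
  simp [averageMap, GroupAlgebra.average, map_sum]

section Restriction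

variable {G V : Type*} [Group G] [AddCommGroup V] [Module ℂ V] (ρ : Representation ℂ G V)

lemma fixedSubmodule_eq_invariants (H : Subgroup G) :
    fixedSubmodule ρ H = invariants (ρ.comp H.subtype) := by
  ext v
  exact ⟨fun hv h => hv h h.2, fun hv h hh => hv ⟨h, hh⟩⟩

lemma fixedSubmodule_comp_subtype {H K : Subgroup G} (hHK : H ≤ K) :
    fixedSubmodule (ρ.comp K.subtype) (H.subgroupOf K) = fixedSubmodule ρ H := by
  ext v
  exact ⟨fun hv h hh => hv ⟨h, hHK hh⟩ hh, fun hv k hk => hv k hk⟩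

lemma repStab_anti {X Y : Set V} (hXY : X ⊆ Y) : repStab ρ Y ≤ repStab ρ X :=
  fun _ hg x hx => hg x (hXY hx)

lemma map_repStab_comp_subtype (K : Subgroup G) (X : Set V) :
    (repStab (ρ.comp K.subtype) X).map K.subtype = K ⊓ repStab ρ X := by
  ext g
  constructor
  · rintro ⟨k, hk, rfl⟩
    exact ⟨k.2, hk⟩
  · rintro ⟨hgK, hg⟩
    exact ⟨⟨g, hgK⟩, hg, rfl⟩

end Restriction

namespace Representation.IsIntertwiningMap

variable {Γ V W : Type*} [Group Γ] [AddCommGroup V] [Module ℂ V] [AddCommGroup W] [Module ℂ W]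
  {ρ : Representation ℂ Γ V} {τ : Representation ℂ Γ W} {φ : V →ₗ[ℂ] W}

lemma repStab_le_repStab_image (hφ : IsIntertwiningMap ρ τ φ) (X : Set V) :
    repStab ρ X ≤ repStab τ (φ '' X) := by
  rintro g hg _ ⟨x, hx, rfl⟩
  rw [← hφ.isIntertwining, hg x hx]

lemma map_eq_top_of_isIrredRep (hφ : IsIntertwiningMap ρ τ φ) (hτ : IsIrredRep τ)
    {p : Submodule ℂ V} (hp : ∀ g : Γ, ∀ v ∈ p, ρ g v ∈ p) (hne : p.map φ ≠ ⊥) :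
    p.map φ = ⊤ := by
  refine (hτ.2 _ ?_).resolve_left hne
  rintro g _ ⟨v, hv, rfl⟩
  exact ⟨ρ g v, hp g v hv, hφ.isIntertwining g v⟩

lemma fixedSubmodule_inf_map_le (hφ : IsIntertwiningMap ρ τ φ) (H : Subgroup Γ) [Finite H]
    {p : Submodule ℂ V} (hp : ∀ h ∈ H, ∀ v ∈ p, ρ h v ∈ p) :
    fixedSubmodule τ H ⊓ p.map φ ≤ (fixedSubmodule ρ H ⊓ p).map φ := by
  have := Fintype.ofFinite H
  rintro _ ⟨hw, v, hv, rfl⟩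
  refine ⟨averageMap (ρ.comp H.subtype) v, ⟨?_, ?_⟩, ?_⟩
  · rw [fixedSubmodule_eq_invariants]
    exact averageMap_invariant _ v
  · rw [averageMap_apply]
    exact p.smul_mem _ (p.sum_mem fun h _ => hp h h.2 v hv)
  · rw [fixedSubmodule_eq_invariants] at hw
    rw [averageMap_apply, map_smul, map_sum, ← averageMap_id _ _ hw, averageMap_apply]
    simp only [MonoidHom.comp_apply, hφ.isIntertwining]

end Representation.IsIntertwiningMap

section Induced

variable {G U : Type*} [Group G] [AddCommGroup U] [Module ℂ U] (K : Subgroup G)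
  (σ : Representation ℂ K U)

def indEvalOne : indCarrier K σ →ₗ[ℂ] U where
  toFun f := (f : G → U) 1
  map_add' _ _ := rfl
  map_smul' _ _ := rfl

lemma indEvalOne_indRep (g : G) (f : indCarrier K σ) :
    indEvalOne K σ (indRep K σ g f) = (f : G → U) g := by
  simp [indEvalOne, indRep]

lemma isIntertwiningMap_indEvalOne :
    IsIntertwiningMap ((indRep K σ).comp K.subtype) σ (indEvalOne K σ) := by
  refine ⟨fun k f => ?_⟩
  rw [MonoidHom.comp_apply, indEvalOne_indRep, Subgroup.coe_subtype, ← mul_one (k : G), f.2 k 1]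
  rfl

lemma map_indEvalOne_ne_bot {p : Submodule ℂ (indCarrier K σ)}
    (hp : ∀ g : G, ∀ v ∈ p, indRep K σ g v ∈ p) (hp0 : p ≠ ⊥) : p.map (indEvalOne K σ) ≠ ⊥ := by
  obtain ⟨f, hf, hf0⟩ := (Submodule.ne_bot_iff p).mp hp0
  obtain ⟨g, hg⟩ : ∃ g, (f : G → U) g ≠ 0 := by
    by_contra! h
    exact hf0 (Subtype.ext (funext h))
  refine (Submodule.ne_bot_iff _).mpr ⟨_, ⟨indRep K σ g f, hp g f hf, rfl⟩, ?_⟩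
  rwa [indEvalOne_indRep]

end Induced

theorem fixed_ne_bot_and_stab_le_of_component_general {G : Type*} [Group G] [Finite G]
    (H K : Subgroup G) (hHK : H ≤ K)
    {U : Type*} [AddCommGroup U] [Module ℂ U]
    (σ : Representation ℂ K U) (hσ : IsIrredRep σ)
    (hUH : fixedSubmodule σ (H.subgroupOf K) ≠ ⊥)
    (p : Submodule ℂ (indCarrier K σ))
    (hp : ∀ g : G, ∀ v ∈ p, indRep K σ g v ∈ p)
    (hpirr : IsIrredRep (V := ↥p) (subRep (indRep K σ) p hp)) :
    fixedSubmodule (indRep K σ) H ⊓ p ≠ ⊥ ∧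
      K ⊓ repStab (indRep K σ) ↑(fixedSubmodule (indRep K σ) H ⊓ p) ≤
        (repStab σ ↑(fixedSubmodule σ (H.subgroupOf K))).map K.subtype := by
  set X := fixedSubmodule (indRep K σ) H ⊓ p
  have hφ := isIntertwiningMap_indEvalOne K σ
  have hpK : ∀ k : K, ∀ v ∈ p, (indRep K σ).comp K.subtype k v ∈ p := fun k => hp k
  have hsurj : p.map (indEvalOne K σ) = ⊤ := hφ.map_eq_top_of_isIrredRep hσ hpK
    (map_indEvalOne_ne_bot K σ hp (Submodule.nontrivial_iff_ne_bot.mp hpirr.1))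
  have hUX : fixedSubmodule σ (H.subgroupOf K) ≤ X.map (indEvalOne K σ) := by
    have := hφ.fixedSubmodule_inf_map_le (H.subgroupOf K) (fun h _ => hpK h)
    rwa [hsurj, inf_top_eq, fixedSubmodule_comp_subtype _ hHK] at this
  refine ⟨fun hX => hUH (eq_bot_iff.mpr ?_), ?_⟩
  · simpa [hX] using hUX
  · rw [← map_repStab_comp_subtype]
    refine Subgroup.map_mono ((hφ.repStab_le_repStab_image X).trans (repStab_anti σ ?_))
    rw [← Submodule.map_coe]
    exact hUX

/-- For `H ≤ K ≤ G`, `U` an irreducible representation of `K` with `U^H ≠ 0`, and `V`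
an irreducible component of `W = Ind_K^G U`: `V^H ≠ 0` and the pointwise stabilizer in
`K` of `V^H` is contained in the pointwise stabilizer in `K` of `U^H`. -/
theorem fixed_ne_bot_and_stab_le_of_component {G : Type*} [Group G] [Finite G]
    (H K : Subgroup G) (hHK : H ≤ K)
    {U : Type*} [AddCommGroup U] [Module ℂ U] [FiniteDimensional ℂ U]
    (σ : Representation ℂ K U) (hσ : IsIrredRep σ)
    (hUH : fixedSubmodule σ (H.subgroupOf K) ≠ ⊥)
    (p : Submodule ℂ (indCarrier K σ))
    (hp : ∀ g : G, ∀ v ∈ p, indRep K σ g v ∈ p)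
    (hpirr : IsIrredRep (V := ↥p) (subRep (indRep K σ) p hp)) :
    fixedSubmodule (indRep K σ) H ⊓ p ≠ ⊥ ∧
      K ⊓ repStab (indRep K σ) ↑(fixedSubmodule (indRep K σ) H ⊓ p) ≤
        (repStab σ ↑(fixedSubmodule σ (H.subgroupOf K))).map K.subtype :=
  fixed_ne_bot_and_stab_le_of_component_general H K hHK σ hσ hUH p hp hpirr
end

section
/- Let G be a finite group and H a maximal subgroup of G. Then there exists an irreducible finite-dimensional complex representation V of G such that the pointwise stabilizer of the H-fixed subspace equals H, i.e., G_{(V^H)} = H. -/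
namespace Representation

open scoped MonoidAlgebra

theorem iSup_toSubmodule_atoms_eq_top {k G V : Type*} [Field k] [Monoid G] [AddCommGroup V]
    [Module k V] (ρ : Representation k G V) [IsSemisimpleRepresentation ρ] :
    ⨆ σ : {σ : Subrepresentation ρ // IsAtom σ}, σ.1.toSubmodule = ⊤ := by
  have : IsSemisimpleModule k[G] ρ.asModule :=
    (isSemisimpleRepresentation_iff_isSemisimpleModule_asModule ρ).1 ‹_›
  let e := (Subrepresentation.subrepresentationSubmoduleOrderIso (ρ := ρ)).symm
  have htop :
      (⨆ S : {S : Submodule k[G] ρ.asModule // IsAtom S}, S.1).restrictScalars k = ⊤ := by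
    rw [← Submodule.restrictScalars_top k k[G] ρ.asModule]
    exact congrArg _ ((sSup_eq_iSup' _).symm.trans sSup_atoms_eq_top)
  refine eq_top_iff.2 (htop.symm.le.trans ?_)
  rw [Submodule.restrictScalars_iSup]
  exact iSup_le fun S => le_iSup_of_le ⟨e S, (e.isAtom_iff S).2 S.2⟩ le_rfl

end Representation

section

variable {G : Type*} [Group G] {V : Type*} [AddCommGroup V] [Module ℂ V]

theorem le_repStab_fixedSubmodule (ρ : Representation ℂ G V) (H : Subgroup G) :
    H ≤ repStab ρ (fixedSubmodule ρ H) :=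
  fun h hh _ hv => hv h hh

theorem norm_comp_subtype_mem_fixedSubmodule (ρ : Representation ℂ G V) (H : Subgroup G)
    [Fintype H] (v : V) : Representation.norm (ρ.comp H.subtype) v ∈ fixedSubmodule ρ H :=
  fun h hh => Representation.self_norm_apply (ρ.comp H.subtype) ⟨h, hh⟩ v

theorem norm_comp_subtype_apply_of_mem_fixedSubmodule (ρ : Representation ℂ G V) (H : Subgroup G)
    [Fintype H] {v : V} (hv : v ∈ fixedSubmodule ρ H) :
    Representation.norm (ρ.comp H.subtype) v = Fintype.card H • v := by
  simp [Representation.norm, LinearMap.sum_apply, fun h : H => hv h h.2]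

namespace Subrepresentation

theorem isIrredRep_toRepresentation {ρ : Representation ℂ G V}
    {σ : Subrepresentation ρ} (hσ : IsAtom σ) : IsIrredRep σ.toRepresentation := by
  refine ⟨Submodule.nontrivial_iff_ne_bot.2 fun h => hσ.1 (toSubmodule_injective h),
    fun p hp => ?_⟩
  let τ : Subrepresentation ρ := ⟨p.map σ.toSubmodule.subtype, by
    rintro g _ ⟨w, hw, rfl⟩
    exact ⟨σ.toRepresentation g w, hp g w hw, rfl⟩⟩
  have hτ : τ ≤ σ := by
    rintro _ ⟨w, _, rfl⟩
    exact w.2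
  have hp : p = τ.toSubmodule.comap σ.toSubmodule.subtype :=
    (Submodule.comap_map_eq_of_injective Subtype.val_injective p).symm
  rcases hσ.le_iff.1 hτ with h | h
  · left
    rw [hp, h]
    exact (Submodule.comap_bot _).trans (Submodule.ker_subtype _)
  · right
    rw [hp, h]
    exact Submodule.comap_subtype_self _

end Subrepresentation

theorem iInf_repStab_fixedSubmodule_atoms_le [Finite G] (ρ : Representation ℂ G V)
    (H : Subgroup G) :
    ⨅ σ : {σ : Subrepresentation ρ // IsAtom σ},
        repStab σ.1.toRepresentation (fixedSubmodule σ.1.toRepresentation H) ≤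
      repStab ρ (fixedSubmodule ρ H) := by
  have : Fintype H := Fintype.ofFinite H
  intro g hg v hv
  let N := Representation.norm (ρ.comp H.subtype)
  -- `N` maps each irreducible `σ` into `σ^H`, which `g` fixes; as the `σ` span `V`, `g` fixes
  -- all of `N V ⊇ |H| • V^H`.
  have hker : ⨆ σ : {σ : Subrepresentation ρ // IsAtom σ}, σ.1.toSubmodule ≤
      LinearMap.ker ((ρ g - 1) ∘ₗ N) := by
    refine iSup_le fun σ w hw => ?_
    have hNw : N w ∈ σ.1.toSubmodule := by
      simp only [N, Representation.norm, LinearMap.sum_apply]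
      exact Submodule.sum_mem _ fun h _ => σ.1.apply_mem_toSubmodule h hw
    have hfix := (Subgroup.mem_iInf.1 hg σ) ⟨N w, hNw⟩
      fun h hh => Subtype.ext (norm_comp_subtype_mem_fixedSubmodule ρ H w h hh)
    have hgNw : ρ g (N w) = N w := congrArg Subtype.val hfix
    simpa [sub_eq_zero] using hgNw
  rw [Representation.iSup_toSubmodule_atoms_eq_top] at hker
  have hv' : ρ g (N v) = N v := by
    simpa [sub_eq_zero] using hker (Submodule.mem_top (x := v))
  rw [norm_comp_subtype_apply_of_mem_fixedSubmodule ρ H hv, ← Nat.cast_smul_eq_nsmul ℂ,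
    map_smul] at hv'
  exact smul_right_injective V (Nat.cast_ne_zero.2 Fintype.card_ne_zero) hv'

theorem repStab_fixedSubmodule_ofMulAction_quotient (H : Subgroup G) :
    repStab (Representation.ofMulAction ℂ G (G ⧸ H))
      (fixedSubmodule (Representation.ofMulAction ℂ G (G ⧸ H)) H) = H := by
  have hstab (g : G) : g • ((1 : G) : G ⧸ H) = (1 : G) ↔ g ∈ H := by
    rw [← MulAction.mem_stabilizer_iff, MulAction.stabilizer_quotient]
  refine le_antisymm (fun g hg => ?_) (le_repStab_fixedSubmodule _ H)
  have hfix : MonoidAlgebra.single ((1 : G) : G ⧸ H) (1 : ℂ) ∈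
      fixedSubmodule (Representation.ofMulAction ℂ G (G ⧸ H)) H := fun h hh => by
    rw [Representation.ofMulAction_single, (hstab h).2 hh]
  have hg₁ := hg _ hfix
  rwa [Representation.ofMulAction_single, MonoidAlgebra.single_left_inj one_ne_zero,
    hstab] at hg₁

end

theorem IsCoatom.exists_eq_of_iInf_le {α ι : Type*} [CompleteLattice α] {a : α}
    (ha : IsCoatom a) {f : ι → α} (hle : ∀ i, a ≤ f i) (hinf : ⨅ i, f i ≤ a) :
    ∃ i, f i = a := by
  by_contra! hne
  have htop : ∀ i, f i = ⊤ := fun i => ha.2 _ ((hle i).lt_of_ne (hne i).symm)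
  exact ha.1 (top_le_iff.1 (by simpa [htop] using hinf))

/-- A maximal interval `[H, G]` is linearly primitive: if `H` is a maximal subgroup of
the finite group `G`, there is an irreducible finite-dimensional complex representation
`V` of `G` with `G_(V^H) = H`. -/
theorem maximal_subgroup_linearly_primitive {G : Type} [Group G] [Finite G]
    (H : Subgroup G) (hH : IsCoatom H) :
    ∃ V : FDRep ℂ G, IsIrredRep V.ρ ∧ repStab V.ρ ↑(fixedSubmodule V.ρ H) = H := by
  let ρ := Representation.ofMulAction ℂ G (G ⧸ H)
  obtain ⟨σ, hσ⟩ := hH.exists_eq_of_iInf_le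
    (fun σ : {σ : Subrepresentation ρ // IsAtom σ} => le_repStab_fixedSubmodule _ H)
    (repStab_fixedSubmodule_ofMulAction_quotient H ▸ iInf_repStab_fixedSubmodule_atoms_le ρ H)
  exact ⟨FDRep.of σ.1.toRepresentation,
    Subrepresentation.isIrredRep_toRepresentation σ.2, hσ⟩
end
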